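/- (Slicing lemma) Let T be a set, η an ordinal, and suppose (i) for all X', Y' ⊆ T, every surjection Y' → X' admits an injection X' → Y' (PP restricted to T), and (ii) choice holds for families indexed by well-orderable sets (AC_WO). If A, B ⊆ T × η and f : B → A is a surjection, then there exists an injection g : A → B. -/

import Mathlib

/-!
Let `ε a` be the least level `e < η` at which some point of `B` is sent to `a`, and keep only the
points `b = (s, e) ∈ B` sitting at the least level `e = ε (f b)` of their image; `f` stays
surjective on them. Slice `A` by `(ε a, a.2)` and the kept points by the same key of their image.
Within a slice the `η`-coordinate is constant on both sides, so both slices are copies of subsets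
of `T` and `f` is a surjection between them; `PP↾T` reverses it. The slices are indexed by the
well-ordered `η ×ₗ η`, so `AC_WO` picks one injection per slice and they glue.
-/

universe u

open Function Set

def PartitionPrincipleOn (T : Type*) : Prop :=
  ∀ X' Y' : Set T, (∃ f : Y' → X', Surjective f) → ∃ g : X' → Y', Injective g

def WellOrderableChoice : Prop :=
  ∀ (ι : Type u) (r : ι → ι → Prop), IsWellOrder ι r →
    ∀ A : ι → Type u, (∀ i, Nonempty (A i)) → Nonempty ((i : ι) → A i)

theorem PartitionPrincipleOn.exists_injective {T X Y : Type*} (hPP : PartitionPrincipleOn T)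
    {i : X → T} (hi : Injective i) {j : Y → T} (hj : Injective j) {F : Y → X}
    (hF : Surjective F) : ∃ g : X → Y, Injective g := by
  let eX := Equiv.ofInjective i hi
  let eY := Equiv.ofInjective j hj
  obtain ⟨g, hg⟩ := hPP (range i) (range j)
    ⟨eX ∘ F ∘ eY.symm, eX.surjective.comp (hF.comp eY.symm.surjective)⟩
  exact ⟨eY.symm ∘ g ∘ eX, eY.symm.injective.comp (hg.comp eX.injective)⟩

theorem WellOrderableChoice.exists_injective_of_fiberwise (hAC : WellOrderableChoice.{u})
    {ι α β : Type u} {r : ι → ι → Prop} (hr : IsWellOrder ι r) (κ : α → ι) (μ : β → ι)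
    (h : ∀ i, ∃ g : {a // κ a = i} → {b // μ b = i}, Injective g) :
    ∃ g : α → β, Injective g := by
  obtain ⟨G⟩ := hAC ι r hr (fun i => {g : {a // κ a = i} → {b // μ b = i} // Injective g})
    fun i => let ⟨g, hg⟩ := h i; ⟨⟨g, hg⟩⟩
  exact ⟨Equiv.sigmaFiberEquiv μ ∘ Sigma.map id (fun i => (G i).1) ∘
      (Equiv.sigmaFiberEquiv κ).symm,
    (Equiv.injective _).comp ((injective_id.sigma_map fun i => (G i).2).comp (Equiv.injective _))⟩

theorem Function.Surjective.exists_surjective_restrict_level {α β η : Type*} {f : β → α}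
    (hf : Surjective f) (h : β → η) {r : η → η → Prop} (hr : WellFounded r) :
    ∃ ε : α → η, Surjective fun b : {b // h b = ε (f b)} => f b := by
  have hne : ∀ a, (h '' (f ⁻¹' {a})).Nonempty := fun a => by
    obtain ⟨b, rfl⟩ := hf a
    exact ⟨h b, b, rfl, rfl⟩
  refine ⟨fun a => hr.min _ (hne a), fun a => ?_⟩
  obtain ⟨b, hba : f b = a, hb⟩ := hr.min_mem _ (hne a)
  subst hba
  exact ⟨⟨b, hb⟩, rfl⟩

theorem exists_injective_of_surjective_of_injOn_fibers {T : Type*}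
    (hPP : PartitionPrincipleOn T) (hAC : WellOrderableChoice.{u}) {ι α β : Type u}
    {r : ι → ι → Prop} (hr : IsWellOrder ι r) {f : β → α} (hf : Surjective f) (κ : α → ι)
    {p : α → T} (hp : ∀ i, InjOn p {a | κ a = i})
    {q : β → T} (hq : ∀ i, InjOn q {b | κ (f b) = i}) :
    ∃ g : α → β, Injective g :=
  hAC.exists_injective_of_fiberwise hr κ (κ ∘ f) fun i =>
    hPP.exists_injective (hp i).injective (hq i).injective (F := fun b => ⟨f b, b.2⟩)
      fun ⟨a, ha⟩ => by
        obtain ⟨b, rfl⟩ := hf a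
        exact ⟨⟨b, ha⟩, rfl⟩

/-- Slicing lemma: from `PP↾T` and `AC_WO`, every surjection between subsets of
`T × η` (with `η` a well-ordered type, i.e. an ordinal) splits into an injection
the other way. -/
theorem slicing_lemma {T : Type u} (η : Type u) (rη : η → η → Prop)
    (hη : IsWellOrder η rη)
    (hPP : ∀ X' Y' : Set T, (∃ f : Y' → X', Function.Surjective f) →
      ∃ g : X' → Y', Function.Injective g)
    (hACWO : ∀ (ι : Type u) (r : ι → ι → Prop), IsWellOrder ι r →
      ∀ A : ι → Type u, (∀ i, Nonempty (A i)) → Nonempty ((i : ι) → A i))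
    (A B : Set (T × η)) (f : B → A) (hf : Function.Surjective f) :
    ∃ g : A → B, Function.Injective g := by
  have := hη
  obtain ⟨ε, hε⟩ := hf.exists_surjective_restrict_level (fun b => b.1.2) hη.wf
  let κ : A → η × η := fun a => (ε a, a.1.2)
  have hA : ∀ i, InjOn (fun a : A => a.1.1) {a | κ a = i} := fun _ a ha a' ha' h =>
    Subtype.ext (Prod.ext h (Prod.ext_iff.1 (ha.trans ha'.symm)).2)
  have hB : ∀ i, InjOn (fun b : {b : B // b.1.2 = ε (f b)} => b.1.1.1) {b | κ (f b) = i} :=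
    fun _ b hb b' hb' h => Subtype.ext <| Subtype.ext <| Prod.ext h <| by
      rw [b.2, b'.2]
      exact (Prod.ext_iff.1 (hb.trans hb'.symm)).1
  obtain ⟨g, hg⟩ := exists_injective_of_surjective_of_injOn_fibers hPP hACWO
    (r := Prod.Lex rη rη) inferInstance hε κ hA hB
  exact ⟨Subtype.val ∘ g, Subtype.val_injective.comp hg⟩
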